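/- Fix constants L > 0, W > 0, R_S > 0 and reals α, μ, η₂, λ₂ with α < 0, μ < −1, 0 < η₂ < α/μ, and α/μ − η₂ ≤ λ₂ ≤ α/μ + η₂. For continuously differentiable u and continuous p, q on D := [0,L] × [0,W], define ΔH := (1/2) ∫_D ( |∇u|² + R_S⁻² u² ) dx dy − (1/2) R_S⁻² α ∫_D ( p² − (2/3) μ⁻¹ q² ) dx dy, and the squared norm ‖(u,p,q)‖²(λ₂) := (1/2) ∫_D ( |∇u|² + R_S⁻² u² ) dx dy + (1/2) R_S⁻² λ₂ ∫_D ( p² + (2/3) q² ) dx dy. Then ΔH ≥ ((α/μ − η₂)/λ₂) · ‖(u,p,q)‖²(λ₂) (lower convexity estimate establishing Lyapunov stability for basic states with α < 0 and μ < −1). -/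
import Mathlib

open MeasureTheory


/-- Partial derivative in `x` of a field of `(x, y)`. -/
noncomputable def pdx (f : ℝ → ℝ → ℝ) (x y : ℝ) : ℝ := deriv (fun x' => f x' y) x

/-- Partial derivative in `y` of a field of `(x, y)`. -/
noncomputable def pdy (f : ℝ → ℝ → ℝ) (x y : ℝ) : ℝ := deriv (fun y' => f x y') y

set_option maxHeartbeats 1000000 in
/-- Lower convexity estimate for the pseudoenergy–momentum establishing Lyapunov
stability of the baroclinic zonal jet with `α < 0` and `μ < −1`: for
`0 < η₂ < α/μ` and `α/μ − η₂ ≤ λ₂ ≤ α/μ + η₂`,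
`ΔH ≥ ((α/μ − η₂)/λ₂) · ‖(u,p,q)‖²(λ₂)`. -/
theorem lyapunov_convexity_estimate_two
    (L W RS α μ η₂ lam₂ : ℝ) (hL : 0 < L) (hW : 0 < W) (hRS : 0 < RS)
    (hα : α < 0) (hμ : μ < -1)
    (hη : 0 < η₂) (hη' : η₂ < α / μ)
    (hlamlo : α / μ - η₂ ≤ lam₂) (hlamhi : lam₂ ≤ α / μ + η₂)
    (u p q : ℝ → ℝ → ℝ)
    (hu : ContDiffOn ℝ 1 (fun z : ℝ × ℝ => u z.1 z.2) (Set.Icc 0 L ×ˢ Set.Icc 0 W))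
    (hp : ContinuousOn (fun z : ℝ × ℝ => p z.1 z.2) (Set.Icc 0 L ×ˢ Set.Icc 0 W))
    (hq : ContinuousOn (fun z : ℝ × ℝ => q z.1 z.2) (Set.Icc 0 L ×ˢ Set.Icc 0 W))
    (ΔH nrmSq : ℝ)
    (hΔH : ΔH = 1 / 2 * (∫ x in (0:ℝ)..L, ∫ y in (0:ℝ)..W,
        ((pdx u x y) ^ 2 + (pdy u x y) ^ 2 + (RS ^ 2)⁻¹ * (u x y) ^ 2))
      - 1 / 2 * (RS ^ 2)⁻¹ * α * ∫ x in (0:ℝ)..L, ∫ y in (0:ℝ)..W,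
        ((p x y) ^ 2 - 2 / 3 * μ⁻¹ * (q x y) ^ 2))
    (hnrm : nrmSq = 1 / 2 * (∫ x in (0:ℝ)..L, ∫ y in (0:ℝ)..W,
        ((pdx u x y) ^ 2 + (pdy u x y) ^ 2 + (RS ^ 2)⁻¹ * (u x y) ^ 2))
      + 1 / 2 * (RS ^ 2)⁻¹ * lam₂ * ∫ x in (0:ℝ)..L, ∫ y in (0:ℝ)..W,
        ((p x y) ^ 2 + 2 / 3 * (q x y) ^ 2)) :
    (α / μ - η₂) / lam₂ * nrmSq ≤ ΔH := by
  have hL0 : (0:ℝ) ≤ L := hL.le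
  have hW0 : (0:ℝ) ≤ W := hW.le
  -- integrability of sliced inner integrals of squares
  have key : ∀ f : ℝ → ℝ → ℝ,
      ContinuousOn (fun z : ℝ × ℝ => f z.1 z.2) (Set.Icc 0 L ×ˢ Set.Icc 0 W) →
      IntervalIntegrable (fun x => ∫ y in (0:ℝ)..W, (f x y) ^ 2) volume 0 L := by
    intro f hf
    have hc : ContinuousOn (fun z : ℝ × ℝ => (f z.1 z.2) ^ 2)
        (Set.Icc 0 L ×ˢ Set.Icc 0 W) := hf.pow 2
    have hcpt : IsCompact (Set.Icc (0:ℝ) L ×ˢ Set.Icc (0:ℝ) W) :=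
      isCompact_Icc.prod isCompact_Icc
    have hint : IntegrableOn (fun z : ℝ × ℝ => (f z.1 z.2) ^ 2)
        (Set.Icc 0 L ×ˢ Set.Icc 0 W) volume := hc.integrableOn_compact hcpt
    have hprod : Integrable (fun z : ℝ × ℝ => (f z.1 z.2) ^ 2)
        ((volume.restrict (Set.Icc (0:ℝ) L)).prod (volume.restrict (Set.Icc (0:ℝ) W))) := by
      rw [Measure.prod_restrict]
      rwa [IntegrableOn, Measure.volume_eq_prod] at hint
    have h2 := hprod.integral_prod_left
    have heq : (fun x => ∫ y in (0:ℝ)..W, (f x y) ^ 2)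
        = fun x => ∫ y, (fun z : ℝ × ℝ => (f z.1 z.2) ^ 2) (x, y)
            ∂(volume.restrict (Set.Icc (0:ℝ) W)) := by
      funext x
      rw [intervalIntegral.integral_of_le hW0]
      exact (integral_Icc_eq_integral_Ioc (f := fun y => (f x y) ^ 2)
        (μ := volume) (x := (0:ℝ)) (y := W)).symm
    rw [intervalIntegrable_iff_integrableOn_Ioc_of_le hL0, heq]
    exact h2.mono_measure (Measure.restrict_mono Set.Ioc_subset_Icc_self le_rfl)
  have keyp := key p hp
  have keyq := key q hq
  set Ip : ℝ → ℝ := fun x => ∫ y in (0:ℝ)..W, (p x y) ^ 2 with hIp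
  set Iq : ℝ → ℝ := fun x => ∫ y in (0:ℝ)..W, (q x y) ^ 2 with hIq
  set a : ℝ := ∫ x in (0:ℝ)..L, Ip x with ha_def
  set b : ℝ := ∫ x in (0:ℝ)..L, Iq x with hb_def
  set A : ℝ := ∫ x in (0:ℝ)..L, ∫ y in (0:ℝ)..W,
      ((pdx u x y) ^ 2 + (pdy u x y) ^ 2 + (RS ^ 2)⁻¹ * (u x y) ^ 2) with hA_def
  -- inner interval integrability of the slices
  have hslice : ∀ (f : ℝ → ℝ → ℝ),
      ContinuousOn (fun z : ℝ × ℝ => f z.1 z.2) (Set.Icc 0 L ×ˢ Set.Icc 0 W) →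
      ∀ x ∈ Set.Icc (0:ℝ) L,
      IntervalIntegrable (fun y => (f x y) ^ 2) volume 0 W := by
    intro f hf x hx
    have hcy : ContinuousOn (fun y => f x y) (Set.Icc 0 W) := by
      have hmap : Continuous fun y : ℝ => ((x, y) : ℝ × ℝ) := by continuity
      exact hf.comp hmap.continuousOn (fun y hy => Set.mk_mem_prod hx hy)
    exact ContinuousOn.intervalIntegrable (by rw [Set.uIcc_of_le hW0]; exact hcy.pow 2)
  -- split the two double integrals
  have hEq1 : (∫ x in (0:ℝ)..L, ∫ y in (0:ℝ)..W,
      ((p x y) ^ 2 - 2 / 3 * μ⁻¹ * (q x y) ^ 2)) = a - 2 / 3 * μ⁻¹ * b := by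
    have hcongr : Set.EqOn
        (fun x => ∫ y in (0:ℝ)..W, ((p x y) ^ 2 - 2 / 3 * μ⁻¹ * (q x y) ^ 2))
        (fun x => Ip x - 2 / 3 * μ⁻¹ * Iq x) (Set.uIcc 0 L) := by
      rw [Set.uIcc_of_le hL0]
      intro x hx
      simp only [hIp, hIq]
      rw [intervalIntegral.integral_sub (hslice p hp x hx)
        ((hslice q hq x hx).const_mul _), intervalIntegral.integral_const_mul]
    rw [intervalIntegral.integral_congr hcongr,
      intervalIntegral.integral_sub keyp (keyq.const_mul _),
      intervalIntegral.integral_const_mul]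
  have hEq2 : (∫ x in (0:ℝ)..L, ∫ y in (0:ℝ)..W,
      ((p x y) ^ 2 + 2 / 3 * (q x y) ^ 2)) = a + 2 / 3 * b := by
    have hcongr : Set.EqOn
        (fun x => ∫ y in (0:ℝ)..W, ((p x y) ^ 2 + 2 / 3 * (q x y) ^ 2))
        (fun x => Ip x + 2 / 3 * Iq x) (Set.uIcc 0 L) := by
      rw [Set.uIcc_of_le hL0]
      intro x hx
      simp only [hIp, hIq]
      rw [intervalIntegral.integral_add (hslice p hp x hx)
        ((hslice q hq x hx).const_mul _), intervalIntegral.integral_const_mul]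
    rw [intervalIntegral.integral_congr hcongr,
      intervalIntegral.integral_add keyp (keyq.const_mul _),
      intervalIntegral.integral_const_mul]
  -- nonnegativity
  have hA : 0 ≤ A := by
    apply intervalIntegral.integral_nonneg hL0
    intro x _
    apply intervalIntegral.integral_nonneg hW0
    intro y _
    positivity
  have ha : 0 ≤ a := by
    apply intervalIntegral.integral_nonneg hL0
    intro x _
    exact intervalIntegral.integral_nonneg hW0 (fun y _ => sq_nonneg _)
  have hb : 0 ≤ b := by
    apply intervalIntegral.integral_nonneg hL0
    intro x _
    exact intervalIntegral.integral_nonneg hW0 (fun y _ => sq_nonneg _)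
  -- reduce to algebra
  rw [hΔH, hnrm, hEq1, hEq2]
  have hβ : 0 < (RS ^ 2)⁻¹ := by positivity
  have hμ0 : μ < 0 := by linarith
  have hinv : μ * μ⁻¹ = 1 := mul_inv_cancel₀ hμ0.ne
  have hμinv_neg : μ⁻¹ < 0 := inv_lt_zero.mpr hμ0
  have hμinv_gt : -1 < μ⁻¹ := by nlinarith
  have hdiv : α / μ = α * μ⁻¹ := div_eq_mul_inv α μ
  have hr_pos : 0 < α * μ⁻¹ - η₂ := by rw [← hdiv]; linarith
  have hlam_pos : 0 < lam₂ := by rw [hdiv] at hlamlo; linarith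
  have h2 : α * μ⁻¹ ≤ -α := by nlinarith [mul_pos (neg_pos.2 hα) (by linarith : (0:ℝ) < μ⁻¹ + 1)]
  rw [hdiv, div_mul_eq_mul_div, div_le_iff₀ hlam_pos]
  have hlamlo' : α * μ⁻¹ - η₂ ≤ lam₂ := by rw [← hdiv]; linarith
  have T1 : 0 ≤ (lam₂ - (α * μ⁻¹ - η₂)) * A :=
    mul_nonneg (by linarith) hA
  have T2 : 0 ≤ (RS ^ 2)⁻¹ * ((-α - (α * μ⁻¹ - η₂)) * (a * lam₂)) :=
    mul_nonneg hβ.le (mul_nonneg (by linarith) (mul_nonneg ha hlam_pos.le))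
  have T3 : 0 ≤ (RS ^ 2)⁻¹ * (η₂ * (b * lam₂)) :=
    mul_nonneg hβ.le (mul_nonneg hη.le (mul_nonneg hb hlam_pos.le))
  nlinarith [T1, T2, T3]
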